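/- The operators X', Y', Z' do not satisfy the Pauli anti-commutation relations: there exist distinct P', Q' ∈ {X', Y', Z'} with P'Q' + Q'P' ≠ 0. -/

import Mathlib

open Matrix Kronecker

noncomputable def PX : Matrix (Fin 2) (Fin 2) ℂ := !![0, 1; 1, 0]
noncomputable def PY : Matrix (Fin 2) (Fin 2) ℂ := !![0, -Complex.I; Complex.I, 0]
noncomputable def PZ : Matrix (Fin 2) (Fin 2) ℂ := !![1, 0; 0, -1]
noncomputable def I2 : Matrix (Fin 2) (Fin 2) ℂ := 1

noncomputable def sgn (b : Bool) : ℂ := if b then -1 else 1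

noncomputable def Xp : Matrix (Fin 2 × Fin 2) (Fin 2 × Fin 2) ℂ :=
  ((1 : ℂ)/(Real.sqrt 6 : ℂ)) •
    (((1 : ℂ)/2) • (PX ⊗ₖ PX) + ((1 : ℂ)/2) • (PX ⊗ₖ PZ) + PZ ⊗ₖ I2)
noncomputable def Yp : Matrix (Fin 2 × Fin 2) (Fin 2 × Fin 2) ℂ :=
  ((1 : ℂ)/(Real.sqrt 6 : ℂ)) •
    (((1 : ℂ)/2) • (I2 ⊗ₖ PX) + I2 ⊗ₖ PZ + ((1 : ℂ)/2) • (PY ⊗ₖ PY))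
noncomputable def Zp : Matrix (Fin 2 × Fin 2) (Fin 2 × Fin 2) ℂ :=
  ((1 : ℂ)/(Real.sqrt 6 : ℂ)) •
    (PZ ⊗ₖ PZ - ((1 : ℂ)/2) • (PX ⊗ₖ I2) - ((1 : ℂ)/2) • (PZ ⊗ₖ PX))

/-!
Distinct Pauli matrices anticommute and their products are `±i` times the third one, so
`(A ⊗ B)(C ⊗ D) = (AC) ⊗ (BD)` expands `X'Y' + Y'X'` into a combination of Pauli strings:
it equals `(X ⊗ I + Z ⊗ X + Z ⊗ Z) / 4`, whose `((0,0),(0,0))` entry is `1/4`.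
-/

lemma PX_mul_PX : PX * PX = 1 := by
  ext i j; fin_cases i <;> fin_cases j <;> simp [PX]

lemma PZ_mul_PZ : PZ * PZ = 1 := by
  ext i j; fin_cases i <;> fin_cases j <;> simp [PZ]

lemma PX_mul_PY : PX * PY = Complex.I • PZ := by
  ext i j; fin_cases i <;> fin_cases j <;> simp [PX, PY, PZ]

lemma PY_mul_PX : PY * PX = -Complex.I • PZ := by
  ext i j; fin_cases i <;> fin_cases j <;> simp [PX, PY, PZ]

lemma PY_mul_PZ : PY * PZ = Complex.I • PX := by
  ext i j; fin_cases i <;> fin_cases j <;> simp [PX, PY, PZ]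

lemma PZ_mul_PY : PZ * PY = -Complex.I • PX := by
  ext i j; fin_cases i <;> fin_cases j <;> simp [PX, PY, PZ]

lemma PZ_mul_PX : PZ * PX = Complex.I • PY := by
  ext i j; fin_cases i <;> fin_cases j <;> simp [PX, PY, PZ]

lemma PX_mul_PZ : PX * PZ = -Complex.I • PY := by
  ext i j; fin_cases i <;> fin_cases j <;> simp [PX, PY, PZ]

lemma one_div_sqrt_six_mul_self :
    (1 / (Real.sqrt 6 : ℂ)) * (1 / (Real.sqrt 6 : ℂ)) = 1 / 6 := by
  rw [div_mul_div_comm, one_mul, ← Complex.ofReal_mul, Real.mul_self_sqrt (by norm_num)]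
  norm_num

lemma Xp_mul_Yp_add_Yp_mul_Xp :
    Xp * Yp + Yp * Xp = (1 / 4 : ℂ) • (PX ⊗ₖ I2 + PZ ⊗ₖ PX + PZ ⊗ₖ PZ) := by
  unfold Xp Yp I2
  rw [smul_mul_smul_comm, smul_mul_smul_comm, ← smul_add, one_div_sqrt_six_mul_self]
  simp only [add_mul, mul_add, Matrix.mul_smul, Matrix.smul_mul, ← Matrix.mul_kronecker_mul,
    PX_mul_PX, PZ_mul_PZ, PX_mul_PY, PY_mul_PX, PY_mul_PZ, PZ_mul_PY, PZ_mul_PX, PX_mul_PZ,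
    Matrix.mul_one, Matrix.one_mul, Matrix.smul_kronecker, Matrix.kronecker_smul, smul_smul,
    neg_mul, mul_neg, neg_neg, Complex.I_mul_I]
  module

lemma Xp_ne_Yp : Xp ≠ Yp := by
  intro h
  have h01 := congr_fun₂ h (0, 0) (0, 1)
  simp [Xp, Yp, PX, PY, PZ, I2] at h01

theorem primed_no_anticommutation :
    ∃ P Q, P ∈ ({Xp, Yp, Zp} : Set (Matrix (Fin 2 × Fin 2) (Fin 2 × Fin 2) ℂ)) ∧
      Q ∈ ({Xp, Yp, Zp} : Set (Matrix (Fin 2 × Fin 2) (Fin 2 × Fin 2) ℂ)) ∧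
      P ≠ Q ∧ P * Q + Q * P ≠ 0 := by
  refine ⟨Xp, Yp, by simp, by simp, Xp_ne_Yp, fun h => ?_⟩
  have h00 := congr_fun₂ (Xp_mul_Yp_add_Yp_mul_Xp ▸ h) (0, 0) (0, 0)
  simp [PX, PZ, I2] at h00
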